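/- Let u, v be smooth with u nonvanishing, satisfying v_x = u and v_t = u^{-2}·u_x - u^{-1} (potential system for u_t = (u^{-2}u_x)_x + u^{-2}u_x, since the antiderivative of u^{-2} is -u^{-1}). Let σ be a smooth solution of σ_t + σ_ss = 0. Then F(t,x) = σ(t,v(t,x))·e^x and G(t,x) = σ_s(t,v(t,x))·u(t,x)^{-1}·e^x satisfy ∂_t F + ∂_x G = 0. -/

import Mathlib

noncomputable def pt (f : ℝ → ℝ → ℝ) (t x : ℝ) : ℝ := deriv (fun s => f s x) t
noncomputable def px (f : ℝ → ℝ → ℝ) (t x : ℝ) : ℝ := deriv (fun y => f t y) x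
def Smooth2 (f : ℝ → ℝ → ℝ) : Prop := ContDiff ℝ (⊤ : ℕ∞) (fun p : ℝ × ℝ => f p.1 p.2)

private lemma fderiv_apply_pt (f : ℝ → ℝ → ℝ) (hf : Smooth2 f) (τ ξ : ℝ) :
    pt f τ ξ = fderiv ℝ (fun p : ℝ × ℝ => f p.1 p.2) (τ, ξ) (1, 0) := by
  have hF : HasFDerivAt (fun p : ℝ × ℝ => f p.1 p.2)
      (fderiv ℝ (fun p : ℝ × ℝ => f p.1 p.2) (τ, ξ)) (τ, ξ) :=
    ((hf.differentiable (by simp)) (τ, ξ)).hasFDerivAt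
  have h : HasDerivAt (fun s => f s ξ)
      (fderiv ℝ (fun p : ℝ × ℝ => f p.1 p.2) (τ, ξ) (1, 0)) τ := by
    have := hF.comp_hasDerivAt τ ((hasDerivAt_id τ).prodMk (hasDerivAt_const τ ξ))
    simpa [Function.comp_def] using this
  exact h.deriv.symm ▸ rfl

private lemma fderiv_apply_px (f : ℝ → ℝ → ℝ) (hf : Smooth2 f) (τ ξ : ℝ) :
    px f τ ξ = fderiv ℝ (fun p : ℝ × ℝ => f p.1 p.2) (τ, ξ) (0, 1) := by
  have hF : HasFDerivAt (fun p : ℝ × ℝ => f p.1 p.2)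
      (fderiv ℝ (fun p : ℝ × ℝ => f p.1 p.2) (τ, ξ)) (τ, ξ) :=
    ((hf.differentiable (by simp)) (τ, ξ)).hasFDerivAt
  have h : HasDerivAt (fun y => f τ y)
      (fderiv ℝ (fun p : ℝ × ℝ => f p.1 p.2) (τ, ξ) (0, 1)) ξ := by
    have := hF.comp_hasDerivAt ξ ((hasDerivAt_const ξ τ).prodMk (hasDerivAt_id ξ))
    simpa [Function.comp_def] using this
  exact h.deriv.symm ▸ rfl

private lemma key (f : ℝ → ℝ → ℝ) (hf : Smooth2 f)
    {a b : ℝ → ℝ} {t a' b' : ℝ} (ha : HasDerivAt a a' t) (hb : HasDerivAt b b' t) :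
    HasDerivAt (fun s => f (a s) (b s))
      (a' * pt f (a t) (b t) + b' * px f (a t) (b t)) t := by
  have hF : HasFDerivAt (fun p : ℝ × ℝ => f p.1 p.2)
      (fderiv ℝ (fun p : ℝ × ℝ => f p.1 p.2) (a t, b t)) (a t, b t) :=
    ((hf.differentiable (by simp)) (a t, b t)).hasFDerivAt
  have h1 : HasDerivAt (fun s => f (a s) (b s))
      (fderiv ℝ (fun p : ℝ × ℝ => f p.1 p.2) (a t, b t) (a', b')) t := by
    have := hF.comp_hasDerivAt t (ha.prodMk hb)
    simpa [Function.comp_def] using this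
  have hlin : fderiv ℝ (fun p : ℝ × ℝ => f p.1 p.2) (a t, b t) (a', b')
      = a' * fderiv ℝ (fun p : ℝ × ℝ => f p.1 p.2) (a t, b t) (1, 0)
        + b' * fderiv ℝ (fun p : ℝ × ℝ => f p.1 p.2) (a t, b t) (0, 1) := by
    have hv : (a', b') = a' • ((1:ℝ), (0:ℝ)) + b' • ((0:ℝ), (1:ℝ)) := by
      simp [Prod.ext_iff]
    rw [hv, map_add, map_smul, map_smul, smul_eq_mul, smul_eq_mul]
  rw [fderiv_apply_pt f hf, fderiv_apply_px f hf, ← hlin]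
  exact h1

private lemma px_smooth (f : ℝ → ℝ → ℝ) (hf : Smooth2 f) : Smooth2 (px f) := by
  have : (fun p : ℝ × ℝ => px f p.1 p.2)
      = fun p : ℝ × ℝ => fderiv ℝ (fun q : ℝ × ℝ => f q.1 q.2) p (0, 1) := by
    funext p
    exact fderiv_apply_px f hf p.1 p.2
  rw [Smooth2, this]
  exact (ContinuousLinearMap.apply ℝ ℝ ((0:ℝ), (1:ℝ))).contDiff.comp
    (hf.fderiv_right (by simp))

theorem stmt11 (u v σ : ℝ → ℝ → ℝ)
    (hu : Smooth2 u) (hv : Smooth2 v) (hσ : Smooth2 σ)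
    (hu0 : ∀ t x, u t x ≠ 0)
    (hvx : ∀ t x, px v t x = u t x)
    (hvt : ∀ t x, pt v t x = (u t x) ^ (-2 : ℤ) * px u t x - (u t x)⁻¹)
    (hback : ∀ t s, pt σ t s + px (px σ) t s = 0) :
    ∀ t x, pt (fun t x => σ t (v t x) * Real.exp x) t x
      + px (fun t x => px σ t (v t x) * (u t x)⁻¹ * Real.exp x) t x = 0 := by
  intro t x
  -- slice derivatives of v and u
  have hvT : HasDerivAt (fun s => v s x) (pt v t x) t := by
    have := key v hv (hasDerivAt_id t) (hasDerivAt_const t x)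
    simpa using this
  have hvX : HasDerivAt (fun y => v t y) (px v t x) x := by
    have := key v hv (hasDerivAt_const x t) (hasDerivAt_id x)
    simpa using this
  have huX : HasDerivAt (fun y => u t y) (px u t x) x := by
    have := key u hu (hasDerivAt_const x t) (hasDerivAt_id x)
    simpa using this
  -- time derivative of F
  have hFt : HasDerivAt (fun s => σ s (v s x) * Real.exp x)
      ((1 * pt σ t (v t x) + pt v t x * px σ t (v t x)) * Real.exp x) t :=
    (key σ hσ (hasDerivAt_id t) hvT).mul_const _
  -- space derivative of G
  have hσx := px_smooth σ hσ
  have h2 : HasDerivAt (fun y => px σ t (v t y))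
      (0 * pt (px σ) t (v t x) + px v t x * px (px σ) t (v t x)) x :=
    key (px σ) hσx (hasDerivAt_const x t) hvX
  have h3 : HasDerivAt (fun y => (u t y)⁻¹) (-(px u t x) / u t x ^ 2) x :=
    huX.inv (hu0 t x)
  have hGx : HasDerivAt (fun y => px σ t (v t y) * (u t y)⁻¹ * Real.exp y)
      (((0 * pt (px σ) t (v t x) + px v t x * px (px σ) t (v t x)) * (u t x)⁻¹
          + px σ t (v t x) * (-(px u t x) / u t x ^ 2)) * Real.exp x
        + px σ t (v t x) * (u t x)⁻¹ * Real.exp x) x := by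
    have := (h2.mul h3).mul (Real.hasDerivAt_exp x)
    exact this.congr_deriv (by simp only [Pi.mul_apply])
  have e1 : pt (fun t x => σ t (v t x) * Real.exp x) t x
      = (1 * pt σ t (v t x) + pt v t x * px σ t (v t x)) * Real.exp x := hFt.deriv
  have e2 : px (fun t x => px σ t (v t x) * (u t x)⁻¹ * Real.exp x) t x
      = ((0 * pt (px σ) t (v t x) + px v t x * px (px σ) t (v t x)) * (u t x)⁻¹
          + px σ t (v t x) * (-(px u t x) / u t x ^ 2)) * Real.exp x
        + px σ t (v t x) * (u t x)⁻¹ * Real.exp x := hGx.deriv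
  rw [e1, e2, hvx, hvt]
  have hz : (u t x) ^ (-2 : ℤ) = ((u t x) ^ 2)⁻¹ := by
    rw [zpow_neg]; norm_cast
  rw [hz]
  have hb := hback t (v t x)
  have hU := hu0 t x
  field_simp
  linear_combination (u t x ^ 2 * Real.exp x) * hb
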